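/- arXiv:0805.4575 — 3 statements merged into one kernel-verified Lean document; each statement's English description precedes it below -/
import Mathlib

section
/- Let λ ∈ P(R). Then there exists an element w ∈ W such that w(λ) is dominant and w is λ-minuscule if and only if ⟨λ, α∨⟩ ≥ −1 for all positive roots α of R. -/
/-!
Common setup: an abstract reduced irreducible crystallographic root system `R`
inside a real inner product space `E`, with simple roots `α i` (`i : ι`) forming
a basis of `E`, Weyl group generated by the reflections in the roots
(equivalently, by the simple reflections), coroot pairing
`⟨x, a∨⟩ = 2 (x, a) / (a, a)`, weight lattice `P(R)`, root lattices `Q(R)`,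
`Q(R_J)`, etc.
-/

open scoped BigOperators

noncomputable section

/-- the pairing `⟨x, a∨⟩ = 2 (x, a)/(a, a)` of `x` with the coroot of `a`. -/
def pairR {E : Type} [NormedAddCommGroup E] [InnerProductSpace ℝ E] (x a : E) : ℝ :=
  2 * (inner ℝ x a : ℝ) / (inner ℝ a a : ℝ)

/-- the reflection in (the hyperplane orthogonal to) `a`. -/
def reflFun {E : Type} [NormedAddCommGroup E] [InnerProductSpace ℝ E] (a : E) (x : E) : E :=
  x - pairR x a • a

/-- A reduced irreducible crystallographic root system in a real inner product
space `E`, whose set of simple roots `simple : ι → E` is a basis of `E`. -/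
structure RootSystemCtx (ι E : Type) [Fintype ι] [DecidableEq ι]
    [NormedAddCommGroup E] [InnerProductSpace ℝ E] : Type where
  Roots : Set E
  simple : ι → E
  simple_mem : ∀ i, simple i ∈ Roots
  finite : Roots.Finite
  ne_zero : ∀ a ∈ Roots, a ≠ 0
  reduced : ∀ a ∈ Roots, ∀ t : ℝ, t • a ∈ Roots → t = 1 ∨ t = -1
  crystal : ∀ a ∈ Roots, ∀ b ∈ Roots, ∃ n : ℤ, pairR a b = (n : ℝ)
  refl_stable : ∀ a ∈ Roots, ∀ b ∈ Roots, reflFun b a ∈ Roots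
  indep : LinearIndependent ℝ simple
  span_top : Submodule.span ℝ (Set.range simple) = ⊤
  pos_neg : ∀ a ∈ Roots, (∃ c : ι → ℕ, a = ∑ i, (c i : ℝ) • simple i) ∨
      (∃ c : ι → ℕ, a = -∑ i, (c i : ℝ) • simple i)
  irred : ∀ R1 R2 : Set E, Roots = R1 ∪ R2 →
      (∀ a ∈ R1, ∀ b ∈ R2, (inner ℝ a b : ℝ) = 0) → R1 = ∅ ∨ R2 = ∅

namespace RootSystemCtx

variable {ι E : Type} [Fintype ι] [DecidableEq ι]
  [NormedAddCommGroup E] [InnerProductSpace ℝ E]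
variable (S : RootSystemCtx ι E)

/-- `R` is simply laced: `⟨a, b∨⟩ ∈ {-1, 0, 1}` for roots `b ≠ ± a`. -/
def SimplyLaced : Prop :=
  ∀ a ∈ S.Roots, ∀ b ∈ S.Roots, b ≠ a → b ≠ -a →
    pairR a b = -1 ∨ pairR a b = 0 ∨ pairR a b = 1

/-- membership in the weight lattice `P(R)`. -/
def IsWeight (x : E) : Prop := ∀ a ∈ S.Roots, ∃ n : ℤ, pairR x a = (n : ℝ)

/-- `x` is dominant: `⟨x, αᵢ∨⟩ ≥ 0` for all simple roots. -/
def IsDominant (x : E) : Prop := ∀ i, 0 ≤ pairR x (S.simple i)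

/-- positive roots: roots that are nonnegative combinations of simple roots. -/
def IsPositiveRoot (a : E) : Prop :=
  a ∈ S.Roots ∧ ∃ c : ι → ℕ, a = ∑ i, (c i : ℝ) • S.simple i

/-- the root lattice `Q(R)`. -/
def rootLattice : AddSubgroup E := AddSubgroup.closure S.Roots

/-- the root lattice `Q(R_J)` of the sub-root system `R_J`. -/
def rootLatticeJ (J : Finset ι) : AddSubgroup E :=
  AddSubgroup.closure (S.simple '' ↑J)

/-- the sub-root system `R_J` determined by the simple roots `α_j`, `j ∈ J`. -/
def RootsJ (J : Finset ι) : Set E :=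
  {a | a ∈ S.Roots ∧ a ∈ Submodule.span ℝ (S.simple '' ↑J)}

/-- `x` is `J`-dominant. -/
def IsJDominant (J : Finset ι) (x : E) : Prop := ∀ j ∈ J, 0 ≤ pairR x (S.simple j)

/-- `x` is `J`-minuscule: `⟨x, a∨⟩ ∈ {-1,0,1}` for all `a ∈ R_J`. -/
def IsJMinuscule (J : Finset ι) (x : E) : Prop :=
  ∀ a ∈ S.RootsJ J, pairR x a = -1 ∨ pairR x a = 0 ∨ pairR x a = 1

/-- the action of a word `[i₁, …, i_t]` of simple reflections:
`s_{i₁} ∘ ⋯ ∘ s_{i_t}`. -/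
def wordAct (l : List ι) : E → E :=
  l.foldr (fun i f => reflFun (S.simple i) ∘ f) id

/-- membership in the Weyl group `W` (generated by the simple reflections). -/
def InWeyl (w : E → E) : Prop := ∃ l : List ι, S.wordAct l = w

/-- the Weyl group orbit `W x`. -/
def weylOrbit (x : E) : Set E := {y | ∃ l : List ι, y = S.wordAct l x}

/-- a word is reduced if no shorter word gives the same Weyl group element. -/
def IsReducedWord (l : List ι) : Prop :=
  ∀ l' : List ι, S.wordAct l' = S.wordAct l → l.length ≤ l'.length

/-- `w ∈ W` is `λ`-minuscule: some (equivalently, any) reduced expression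
`w = s_{i₁} ⋯ s_{i_t}` satisfies
`⟨s_{i_{r+1}} ⋯ s_{i_t} λ, α_{i_r}∨⟩ = -1` for all `1 ≤ r ≤ t`. -/
def IsMinusculeFor (lam : E) (w : E → E) : Prop :=
  ∃ l : List ι, S.wordAct l = w ∧ S.IsReducedWord l ∧
    ∀ r : Fin l.length,
      pairR (S.wordAct (l.drop (r + 1)) lam) (S.simple (l.get r)) = -1

/-- the basis of simple roots. -/
def simpleBasis : Module.Basis ι ℝ E := Module.Basis.mk S.indep S.span_top.ge

/-- `⟨x, ωᵢ⟩`: the pairing with the fundamental coweight `ωᵢ` dual to `αᵢ`,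
i.e. the `i`-th coordinate of `x` in the basis of simple roots. -/
def coweightPair (x : E) (i : ι) : ℝ := S.simpleBasis.repr x i

end RootSystemCtx

/-!
Let `N(x)` be the number of positive roots `α` with `⟨x, α∨⟩ < 0`. A simple reflection `sᵢ`
permutes the positive roots other than `αᵢ`, so it changes `N` by at most one, and lowers it by
exactly one when `⟨x, αᵢ∨⟩ < 0`. Hence every word carrying `λ` to a dominant weight has length
at least `N(λ)`.

The condition `⟨x, α∨⟩ ≥ -1` on all positive roots is unchanged by `sᵢ` when `⟨x, αᵢ∨⟩ = -1`,
and for a weight it forces every negative simple pairing to be `-1`. So, starting from `λ`, one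
may keep reflecting in simple roots pairing to `-1` until the weight is dominant: this is a
`λ`-minuscule word of length `N(λ)`, reduced by the bound above. Conversely, the condition holds
for dominant weights and pulls back along every `λ`-minuscule step.
-/

section Reflection

variable {E : Type} [NormedAddCommGroup E] [InnerProductSpace ℝ E]

lemma pairR_sub_left (x y a : E) : pairR (x - y) a = pairR x a - pairR y a := by
  simp only [pairR, inner_sub_left]
  ring

lemma pairR_smul_left (c : ℝ) (x a : E) : pairR (c • x) a = c * pairR x a := by
  simp only [pairR, real_inner_smul_left]
  ring

lemma pairR_neg_right (x a : E) : pairR x (-a) = -pairR x a := by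
  simp only [pairR, inner_neg_left, inner_neg_right, neg_neg]
  ring

lemma pairR_self {a : E} (ha : a ≠ 0) : pairR a a = 2 := by
  rw [pairR, mul_div_assoc, div_self (inner_self_ne_zero.mpr ha), mul_one]

lemma pairR_nonneg_iff {x a : E} (ha : a ≠ 0) : 0 ≤ pairR x a ↔ 0 ≤ inner ℝ x a := by
  rw [pairR, le_div_iff₀ (real_inner_self_pos.mpr ha), zero_mul]
  constructor <;> intro h <;> linarith

lemma reflFun_self {a : E} (ha : a ≠ 0) : reflFun a a = -a := by
  rw [reflFun, pairR_self ha]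
  module

lemma reflFun_involutive (a : E) : Function.Involutive (reflFun a) := by
  intro x
  rcases eq_or_ne a 0 with rfl | ha
  · simp [reflFun]
  · simp only [reflFun, pairR_sub_left, pairR_smul_left, pairR_self ha]
    module

lemma inner_reflFun_reflFun (a x y : E) :
    inner ℝ (reflFun a x) (reflFun a y) = inner ℝ x y := by
  rcases eq_or_ne a 0 with rfl | ha
  · simp [reflFun]
  · have h : inner ℝ a a ≠ (0 : ℝ) := inner_self_ne_zero.mpr ha
    simp only [reflFun, pairR, inner_sub_left, inner_sub_right, real_inner_smul_left,
      real_inner_smul_right, real_inner_comm a x, real_inner_comm a y]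
    field_simp
    ring

lemma pairR_reflFun_reflFun (a x y : E) : pairR (reflFun a x) (reflFun a y) = pairR x y := by
  simp only [pairR, inner_reflFun_reflFun]

lemma pairR_reflFun_left (a x y : E) : pairR (reflFun a x) y = pairR x (reflFun a y) := by
  conv_lhs => rw [← reflFun_involutive a y]
  exact pairR_reflFun_reflFun a x _

end Reflection

namespace RootSystemCtx

variable {ι E : Type} [Fintype ι] [DecidableEq ι] [NormedAddCommGroup E] [InnerProductSpace ℝ E]
variable (S : RootSystemCtx ι E)

section PositiveRoots

lemma simple_ne_zero (i : ι) : S.simple i ≠ 0 := S.ne_zero _ (S.simple_mem i)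

lemma simpleBasis_apply (i : ι) : S.simpleBasis i = S.simple i := Module.Basis.mk_apply _ _ _

lemma simpleBasis_repr_sum (c : ι → ℝ) (j : ι) :
    S.simpleBasis.repr (∑ i, c i • S.simple i) j = c j := by
  simp only [← simpleBasis_apply]
  exact congrFun (S.simpleBasis.repr_sum_self c) j

lemma simpleBasis_repr_simple (i j : ι) :
    S.simpleBasis.repr (S.simple i) j = if i = j then 1 else 0 := by
  rw [← simpleBasis_apply, Module.Basis.repr_self, Finsupp.single_apply]

variable {S}

lemma IsPositiveRoot.repr_nonneg {a : E} (ha : S.IsPositiveRoot a) (j : ι) :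
    0 ≤ S.simpleBasis.repr a j := by
  obtain ⟨-, c, rfl⟩ := ha
  rw [simpleBasis_repr_sum]
  positivity

lemma isPositiveRoot_of_repr_pos {a : E} (ha : a ∈ S.Roots) {j : ι}
    (hj : 0 < S.simpleBasis.repr a j) : S.IsPositiveRoot a := by
  rcases S.pos_neg a ha with ⟨c, hc⟩ | ⟨c, rfl⟩
  · exact ⟨ha, c, hc⟩
  · rw [map_neg, Finsupp.coe_neg, Pi.neg_apply, simpleBasis_repr_sum] at hj
    have : (0 : ℝ) ≤ c j := by positivity
    linarith

variable (S) in
lemma isPositiveRoot_simple (i : ι) : S.IsPositiveRoot (S.simple i) := by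
  refine ⟨S.simple_mem i, Pi.single i 1, ?_⟩
  simp [Pi.single_apply, apply_ite (Nat.cast : ℕ → ℝ), ite_smul]

variable (S) in
lemma not_isPositiveRoot_neg_simple (i : ι) : ¬ S.IsPositiveRoot (-S.simple i) := fun h => by
  have := h.repr_nonneg i
  norm_num [simpleBasis_repr_simple] at this

lemma IsPositiveRoot.eq_simple {a : E} (ha : S.IsPositiveRoot a) {i : ι}
    (hsupp : ∀ j, j ≠ i → S.simpleBasis.repr a j = 0) : a = S.simple i := by
  obtain ⟨haR, c, hc⟩ := ha
  have hc0 : ∀ j, j ≠ i → (c j : ℝ) = 0 := fun j hj => by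
    rw [← simpleBasis_repr_sum S (fun j => (c j : ℝ)), ← hc, hsupp j hj]
  have hai : a = (c i : ℝ) • S.simple i := by
    rw [hc, Finset.sum_eq_single i (fun j _ hj => by rw [hc0 j hj, zero_smul])
      (fun h => absurd (Finset.mem_univ i) h)]
  rcases S.reduced _ (S.simple_mem i) (c i) (hai ▸ haR) with h | h
  · rw [hai, h, one_smul]
  · have : (0 : ℝ) ≤ c i := by positivity
    linarith

lemma simpleBasis_repr_reflFun_simple {i j : ι} (hji : j ≠ i) (b : E) :
    S.simpleBasis.repr (reflFun (S.simple i) b) j = S.simpleBasis.repr b j := by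
  simp [reflFun, simpleBasis_repr_simple, Ne.symm hji]

lemma IsPositiveRoot.reflFun_simple {b : E} (hb : S.IsPositiveRoot b) {i : ι}
    (hne : b ≠ S.simple i) : S.IsPositiveRoot (reflFun (S.simple i) b) := by
  obtain ⟨j, hji, hj⟩ : ∃ j, j ≠ i ∧ S.simpleBasis.repr b j ≠ 0 := by
    by_contra! h
    exact hne (hb.eq_simple h)
  refine isPositiveRoot_of_repr_pos (S.refl_stable _ hb.1 _ (S.simple_mem i)) (j := j) ?_
  rw [simpleBasis_repr_reflFun_simple hji]
  exact lt_of_le_of_ne (hb.repr_nonneg j) (Ne.symm hj)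

lemma IsPositiveRoot.reflFun_simple_ne {b : E} (hb : S.IsPositiveRoot b) (i : ι) :
    reflFun (S.simple i) b ≠ S.simple i := fun h => by
  have hb' : b = -S.simple i := by
    rw [← reflFun_involutive (S.simple i) b, h, reflFun_self (S.simple_ne_zero i)]
  exact S.not_isPositiveRoot_neg_simple i (hb' ▸ hb)

lemma IsDominant.pairR_nonneg {x : E} (hx : S.IsDominant x) {a : E}
    (ha : S.IsPositiveRoot a) : 0 ≤ pairR x a := by
  obtain ⟨haR, c, rfl⟩ := ha
  rw [pairR_nonneg_iff (S.ne_zero _ haR), inner_sum]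
  refine Finset.sum_nonneg fun i _ => ?_
  rw [real_inner_smul_right]
  exact mul_nonneg (Nat.cast_nonneg _) ((pairR_nonneg_iff (S.simple_ne_zero i)).mp (hx i))

end PositiveRoots

section NegCount

def negSet (x : E) : Set E := {a | S.IsPositiveRoot a ∧ pairR x a < 0}

def negCount (x : E) : ℕ := (S.negSet x).ncard

lemma negSet_finite (x : E) : (S.negSet x).Finite :=
  S.finite.subset fun _ ha => ha.1.1

lemma negSet_reflFun_simple_sdiff (i : ι) (x : E) :
    S.negSet (reflFun (S.simple i) x) \ {S.simple i}
      = reflFun (S.simple i) '' (S.negSet x \ {S.simple i}) := by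
  ext a
  constructor
  · rintro ⟨⟨hapos, haneg⟩, hane : a ≠ S.simple i⟩
    refine ⟨reflFun (S.simple i) a, ⟨⟨hapos.reflFun_simple hane, ?_⟩,
      hapos.reflFun_simple_ne i⟩, reflFun_involutive _ a⟩
    rwa [← pairR_reflFun_left]
  · rintro ⟨b, ⟨⟨hbpos, hbneg⟩, hbne : b ≠ S.simple i⟩, rfl⟩
    refine ⟨⟨hbpos.reflFun_simple hbne, ?_⟩, hbpos.reflFun_simple_ne i⟩
    rwa [pairR_reflFun_reflFun]

lemma ncard_negSet_reflFun_simple_sdiff (i : ι) (x : E) :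
    (S.negSet (reflFun (S.simple i) x) \ {S.simple i}).ncard
      = (S.negSet x \ {S.simple i}).ncard := by
  rw [negSet_reflFun_simple_sdiff,
    Set.ncard_image_of_injective _ (reflFun_involutive _).injective]

lemma negCount_le_negCount_reflFun_simple_add_one (i : ι) (x : E) :
    S.negCount x ≤ S.negCount (reflFun (S.simple i) x) + 1 := by
  have h1 := Set.pred_ncard_le_ncard_sdiff_singleton (S.negSet x) (S.simple i)
  have h2 := Set.ncard_sdiff_singleton_le (S.negSet (reflFun (S.simple i) x)) (S.simple i)
  rw [ncard_negSet_reflFun_simple_sdiff] at h2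
  unfold negCount
  omega

lemma negCount_reflFun_simple_add_one {i : ι} {x : E} (hneg : pairR x (S.simple i) < 0) :
    S.negCount (reflFun (S.simple i) x) + 1 = S.negCount x := by
  have hmem : S.simple i ∈ S.negSet x := ⟨S.isPositiveRoot_simple i, hneg⟩
  have hnmem : S.simple i ∉ S.negSet (reflFun (S.simple i) x) := fun ⟨_, h⟩ => by
    rw [pairR_reflFun_left, reflFun_self (S.simple_ne_zero i), pairR_neg_right] at h
    linarith
  rw [negCount, ← Set.sdiff_singleton_eq_self hnmem, ncard_negSet_reflFun_simple_sdiff,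
    Set.ncard_sdiff_singleton_add_one hmem (S.negSet_finite x), negCount]

lemma negCount_le_negCount_wordAct_add_length (l : List ι) (x : E) :
    S.negCount x ≤ S.negCount (S.wordAct l x) + l.length := by
  induction l with
  | nil => simp [wordAct]
  | cons i l ih =>
    have := S.negCount_le_negCount_reflFun_simple_add_one i (S.wordAct l x)
    simp only [wordAct, List.foldr_cons, Function.comp_apply, List.length_cons] at this ih ⊢
    omega

lemma negCount_eq_zero_iff {x : E} : S.negCount x = 0 ↔ S.IsDominant x := by
  rw [negCount, Set.ncard_eq_zero (S.negSet_finite x), Set.eq_empty_iff_forall_notMem]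
  constructor
  · intro h i
    exact not_lt.mp fun hi => h _ ⟨S.isPositiveRoot_simple i, hi⟩
  · exact fun hx a ⟨ha, hneg⟩ => (hx.pairR_nonneg ha).not_gt hneg

end NegCount

section Minuscule

def GeNegOneOnPos (x : E) : Prop := ∀ a, S.IsPositiveRoot a → -1 ≤ pairR x a

variable {S}

lemma IsDominant.geNegOneOnPos {x : E} (hx : S.IsDominant x) : S.GeNegOneOnPos x :=
  fun _ ha => by linarith [hx.pairR_nonneg ha]

lemma geNegOneOnPos_reflFun_simple_iff {i : ι} {x : E} (hx : pairR x (S.simple i) = -1) :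
    S.GeNegOneOnPos (reflFun (S.simple i) x) ↔ S.GeNegOneOnPos x := by
  have hsi : pairR (reflFun (S.simple i) x) (S.simple i) = 1 := by
    rw [pairR_reflFun_left, reflFun_self (S.simple_ne_zero i), pairR_neg_right, hx, neg_neg]
  constructor
  · intro h a ha
    rcases eq_or_ne a (S.simple i) with rfl | hne
    · rw [hx]
    · rw [← pairR_reflFun_reflFun (S.simple i)]
      exact h _ (ha.reflFun_simple hne)
  · intro h a ha
    rcases eq_or_ne a (S.simple i) with rfl | hne
    · rw [hsi]; norm_num
    · rw [pairR_reflFun_left]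
      exact h _ (ha.reflFun_simple hne)

lemma IsWeight.reflFun_simple {x : E} (hx : S.IsWeight x) (i : ι) :
    S.IsWeight (reflFun (S.simple i) x) := fun a ha => by
  rw [pairR_reflFun_left]
  exact hx _ (S.refl_stable a ha _ (S.simple_mem i))

lemma IsWeight.pairR_simple_eq_neg_one {x : E} (hw : S.IsWeight x) (hx : S.GeNegOneOnPos x)
    {i : ι} (hneg : pairR x (S.simple i) < 0) : pairR x (S.simple i) = -1 := by
  obtain ⟨n, hn⟩ := hw _ (S.simple_mem i)
  have hge := hx _ (S.isPositiveRoot_simple i)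
  rw [hn] at hneg hge ⊢
  have : n = -1 := by
    have : n < 0 := by exact_mod_cast hneg
    have : -1 ≤ n := by exact_mod_cast hge
    omega
  simp [this]

variable (S)

def IsMinusculeWord : List ι → E → Prop
  | [], _ => True
  | i :: l, x => pairR (S.wordAct l x) (S.simple i) = -1 ∧ IsMinusculeWord l x

lemma isMinusculeWord_iff_get (l : List ι) (x : E) :
    S.IsMinusculeWord l x ↔ ∀ r : Fin l.length,
      pairR (S.wordAct (l.drop (r + 1)) x) (S.simple (l.get r)) = -1 := by
  induction l with
  | nil => simp [IsMinusculeWord]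
  | cons i l ih => simp [IsMinusculeWord, ih, Fin.forall_fin_succ]

lemma wordAct_append_singleton (l : List ι) (i : ι) (x : E) :
    S.wordAct (l ++ [i]) x = S.wordAct l (reflFun (S.simple i) x) := by
  induction l with
  | nil => rfl
  | cons j l ih => exact congrArg (reflFun (S.simple j)) ih

lemma isMinusculeWord_append_singleton (l : List ι) (i : ι) (x : E) :
    S.IsMinusculeWord (l ++ [i]) x ↔
      S.IsMinusculeWord l (reflFun (S.simple i) x) ∧ pairR x (S.simple i) = -1 := by
  induction l with
  | nil => simp [IsMinusculeWord, wordAct]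
  | cons j l ih =>
    simp only [List.cons_append, IsMinusculeWord, ih, wordAct_append_singleton, and_assoc]

variable {S}

lemma IsMinusculeWord.geNegOneOnPos {l : List ι} {x : E} (hl : S.IsMinusculeWord l x)
    (h : S.GeNegOneOnPos (S.wordAct l x)) : S.GeNegOneOnPos x := by
  induction l with
  | nil => exact h
  | cons i l ih => exact ih hl.2 ((geNegOneOnPos_reflFun_simple_iff hl.1).mp h)

lemma IsWeight.exists_isMinusculeWord_isDominant {x : E} (hw : S.IsWeight x)
    (hx : S.GeNegOneOnPos x) :
    ∃ l : List ι, S.IsMinusculeWord l x ∧ S.IsDominant (S.wordAct l x) ∧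
      l.length = S.negCount x := by
  induction hn : S.negCount x generalizing x with
  | zero => exact ⟨[], trivial, (S.negCount_eq_zero_iff).mp hn, rfl⟩
  | succ n ih =>
    obtain ⟨i, hneg⟩ : ∃ i, pairR x (S.simple i) < 0 := by
      by_contra! h
      exact n.succ_ne_zero (hn.symm.trans ((S.negCount_eq_zero_iff).mpr h))
    have hi := hw.pairR_simple_eq_neg_one hx hneg
    have hcount := S.negCount_reflFun_simple_add_one hneg
    obtain ⟨l, hl, hdom, hlen⟩ := ih (hw.reflFun_simple i)
      ((geNegOneOnPos_reflFun_simple_iff hi).mpr hx) (by omega)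
    refine ⟨l ++ [i], (S.isMinusculeWord_append_singleton l i x).mpr ⟨hl, hi⟩, ?_, ?_⟩
    · rwa [wordAct_append_singleton]
    · simp [hlen]

lemma isReducedWord_of_length_eq_negCount {l : List ι} {x : E}
    (hdom : S.IsDominant (S.wordAct l x)) (hlen : l.length = S.negCount x) :
    S.IsReducedWord l := fun l' hl' => by
  have := S.negCount_le_negCount_wordAct_add_length l' x
  rw [hl', (S.negCount_eq_zero_iff).mpr hdom] at this
  omega

end Minuscule

end RootSystemCtx

theorem exists_minuscule_dominating_iff_general
    {ι E : Type} [Fintype ι] [DecidableEq ι]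
    [NormedAddCommGroup E] [InnerProductSpace ℝ E]
    (S : RootSystemCtx ι E)
    (lam : E) (hlam : S.IsWeight lam) :
    (∃ w : E → E, S.IsMinusculeFor lam w ∧ S.IsDominant (w lam)) ↔
      ∀ a : E, S.IsPositiveRoot a → -1 ≤ pairR lam a := by
  constructor
  · rintro ⟨_, ⟨l, rfl, -, hl⟩, hdom⟩
    exact ((S.isMinusculeWord_iff_get l lam).mpr hl).geNegOneOnPos hdom.geNegOneOnPos
  · intro h
    obtain ⟨l, hl, hdom, hlen⟩ := hlam.exists_isMinusculeWord_isDominant h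
    exact ⟨S.wordAct l, ⟨l, rfl, RootSystemCtx.isReducedWord_of_length_eq_negCount hdom hlen,
      (S.isMinusculeWord_iff_get l lam).mp hl⟩, hdom⟩

/-- Proposition of [GS], simply-laced case. Let `λ ∈ P(R)`.
There exists `w ∈ W` with `w(λ)` dominant and `w` `λ`-minuscule if and only if
`⟨λ, α∨⟩ ≥ -1` for all positive roots `α` of `R`. -/
theorem exists_minuscule_dominating_iff
    {ι E : Type} [Fintype ι] [DecidableEq ι]
    [NormedAddCommGroup E] [InnerProductSpace ℝ E]
    (S : RootSystemCtx ι E) (hSL : S.SimplyLaced)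
    (lam : E) (hlam : S.IsWeight lam) :
    (∃ w : E → E, S.IsMinusculeFor lam w ∧ S.IsDominant (w lam)) ↔
      ∀ a : E, S.IsPositiveRoot a → -1 ≤ pairR lam a :=
  exists_minuscule_dominating_iff_general S lam hlam
end
end

section
/- Let u ∈ Q(R_J)⊗ℝ be an element such that ⟨u, α∨⟩ ∈ [−1, 1] for all α ∈ R_J. Then ⟨u, β∨⟩ ∈ (−2, 2) for all β ∈ R. -/
/-!
Common setup: an abstract reduced irreducible crystallographic root system `R`
inside a real inner product space `E`, with simple roots `α i` (`i : ι`) forming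
a basis of `E`, Weyl group generated by the reflections in the roots
(equivalently, by the simple reflections), coroot pairing
`⟨x, a∨⟩ = 2 (x, a) / (a, a)`, weight lattice `P(R)`, root lattices `Q(R)`,
`Q(R_J)`, etc.
-/

open scoped BigOperators

noncomputable section

/-!
It suffices to show `⟪u, β⟫ < ⟪β, β⟫` for every root `β`, and to apply this to `±u`. For
`β ∈ R_J` it is the hypothesis. Otherwise let `w` be the orthogonal projection of `β` on the
span of `R_J`; then `⟪u, β⟫ = ⟪w, u⟫` and `⟪w, w⟫ < ⟪β, β⟫`. Since `R` is simply laced,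
`⟪w, δ⟫ = ⟪β, δ⟫ ∈ {0, ±⟪δ, δ⟫ / 2}` for `δ ∈ R_J`, so `⟪w, δ⟫ ⟪u, δ⟫ ≤ ⟪w, δ⟫ ^ 2`.
These termwise inequalities add up to `⟪w, u⟫ ≤ ⟪w, w⟫` through the frame identity
`⟪x, z⟫ = ∑ δ ∈ R_J, ⟪x, δ⟫ ⟪δ, z⟫ / t δ` on the span of `R_J`, where `t δ` (`casimirCoeff`)
is the eigenvalue at `δ` of the reflection-invariant symmetric operator
`x ↦ ∑ δ ∈ R_J, ⟪x, δ⟫ • δ`.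
-/

open scoped InnerProductSpace

section Reflection

variable {E : Type} [NormedAddCommGroup E] [InnerProductSpace ℝ E] {a : E}

lemma inner_reflFun_left (ha : a ≠ 0) (x : E) : ⟪reflFun a x, a⟫_ℝ = -⟪x, a⟫_ℝ := by
  have : ⟪a, a⟫_ℝ ≠ 0 := inner_self_ne_zero.2 ha
  simp only [reflFun, pairR, inner_sub_left, real_inner_smul_left]
  field_simp
  ring

lemma reflFun_reflFun (ha : a ≠ 0) (x : E) : reflFun a (reflFun a x) = x := by
  have : ⟪a, a⟫_ℝ ≠ 0 := inner_self_ne_zero.2 ha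
  rw [reflFun, pairR, inner_reflFun_left ha, reflFun, pairR, sub_sub, ← add_smul]
  field_simp
  simp

end Reflection

section Frame

variable {E : Type} [NormedAddCommGroup E] [InnerProductSpace ℝ E] (F : Finset E)

def casimirCoeff (γ : E) : ℝ := (∑ δ ∈ F, ⟪γ, δ⟫_ℝ ^ 2) / ⟪γ, γ⟫_ℝ

variable {F}

lemma casimirCoeff_pos {γ : E} (hγ : γ ∈ F) (hγ0 : γ ≠ 0) : 0 < casimirCoeff F γ := by
  have hγγ : 0 < ⟪γ, γ⟫_ℝ := real_inner_self_pos.2 hγ0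
  have hle : ⟪γ, γ⟫_ℝ ^ 2 ≤ ∑ δ ∈ F, ⟪γ, δ⟫_ℝ ^ 2 :=
    Finset.single_le_sum (f := fun δ => ⟪γ, δ⟫_ℝ ^ 2) (fun _ _ => sq_nonneg _) hγ
  exact div_pos ((pow_pos hγγ 2).trans_le hle) hγγ

lemma sum_inner_smul_eq_casimirCoeff_smul {γ : E} (hγ0 : γ ≠ 0)
    (hF : ∀ δ ∈ F, reflFun γ δ ∈ F) :
    ∑ δ ∈ F, ⟪γ, δ⟫_ℝ • δ = casimirCoeff F γ • γ := by
  have hγγ : ⟪γ, γ⟫_ℝ ≠ 0 := inner_self_ne_zero.2 hγ0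
  -- reindexing by the reflection in `γ` turns the sum `v` into `-v + 2 * casimirCoeff F γ • γ`
  have hreindex : ∑ δ ∈ F, ⟪γ, δ⟫_ℝ • δ = ∑ δ ∈ F, ⟪γ, reflFun γ δ⟫_ℝ • reflFun γ δ :=
    Finset.sum_nbij' (reflFun γ) (reflFun γ) hF hF (fun δ _ => reflFun_reflFun hγ0 δ)
      (fun δ _ => reflFun_reflFun hγ0 δ) (fun δ _ => by rw [reflFun_reflFun hγ0])
  have hterm : ∀ δ : E, ⟪γ, reflFun γ δ⟫_ℝ • reflFun γ δ
      = -(⟪γ, δ⟫_ℝ • δ) + (2 * ⟪γ, δ⟫_ℝ ^ 2 / ⟪γ, γ⟫_ℝ) • γ := by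
    intro δ
    rw [real_inner_comm, inner_reflFun_left hγ0, reflFun, pairR, real_inner_comm δ γ]
    module
  rw [Finset.sum_congr rfl fun δ _ => hterm δ, Finset.sum_add_distrib, Finset.sum_neg_distrib,
    ← Finset.sum_smul, ← Finset.sum_div, ← Finset.mul_sum] at hreindex
  rw [casimirCoeff]
  linear_combination (norm := module) (2⁻¹ : ℝ) • hreindex

lemma casimirCoeff_eq_of_inner_ne_zero (hF0 : 0 ∉ F) (hF : ∀ γ ∈ F, ∀ δ ∈ F, reflFun γ δ ∈ F)
    {γ δ : E} (hγ : γ ∈ F) (hδ : δ ∈ F) (hγδ : ⟪γ, δ⟫_ℝ ≠ 0) :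
    casimirCoeff F γ = casimirCoeff F δ := by
  have hsymm : ⟪∑ ε ∈ F, ⟪γ, ε⟫_ℝ • ε, δ⟫_ℝ = ⟪γ, ∑ ε ∈ F, ⟪δ, ε⟫_ℝ • ε⟫_ℝ := by
    simp only [sum_inner, inner_sum, real_inner_smul_left, real_inner_smul_right]
    exact Finset.sum_congr rfl fun ε _ => by rw [real_inner_comm ε δ, mul_comm]
  rw [sum_inner_smul_eq_casimirCoeff_smul (ne_of_mem_of_not_mem hγ hF0) (hF γ hγ),
    sum_inner_smul_eq_casimirCoeff_smul (ne_of_mem_of_not_mem hδ hF0) (hF δ hδ),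
    real_inner_smul_left, real_inner_smul_right] at hsymm
  exact mul_right_cancel₀ hγδ hsymm

lemma inner_eq_sum_div_casimirCoeff (hF0 : 0 ∉ F) (hF : ∀ γ ∈ F, ∀ δ ∈ F, reflFun γ δ ∈ F)
    {w : E} (hw : w ∈ Submodule.span ℝ (F : Set E)) (z : E) :
    ⟪w, z⟫_ℝ = ∑ δ ∈ F, ⟪w, δ⟫_ℝ * ⟪δ, z⟫_ℝ / casimirCoeff F δ := by
  induction hw using Submodule.span_induction with
  | mem γ hγ =>
    have hγ0 := ne_of_mem_of_not_mem hγ hF0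
    -- only the `δ` not orthogonal to `γ` contribute, and they share the coefficient of `γ`
    have hcoeff : ∀ δ ∈ F, ⟪γ, δ⟫_ℝ * ⟪δ, z⟫_ℝ / casimirCoeff F δ
        = ⟪γ, δ⟫_ℝ * ⟪δ, z⟫_ℝ / casimirCoeff F γ := by
      intro δ hδ
      by_cases h : ⟪γ, δ⟫_ℝ = 0
      · simp [h]
      · rw [casimirCoeff_eq_of_inner_ne_zero hF0 hF hγ hδ h]
    rw [Finset.sum_congr rfl hcoeff, ← Finset.sum_div, eq_div_iff (casimirCoeff_pos hγ hγ0).ne',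
      mul_comm, ← real_inner_smul_left, ← sum_inner_smul_eq_casimirCoeff_smul hγ0 (hF γ hγ),
      sum_inner]
    simp only [real_inner_smul_left]
  | zero => simp
  | add x y _ _ hx hy =>
    simp only [inner_add_left, hx, hy, add_mul, add_div, Finset.sum_add_distrib]
  | smul c x _ hx =>
    simp only [real_inner_smul_left, hx, Finset.mul_sum, mul_assoc, mul_div_assoc]

lemma inner_le_inner_self_of_forall_mul_le_sq (hF0 : 0 ∉ F)
    (hF : ∀ γ ∈ F, ∀ δ ∈ F, reflFun γ δ ∈ F) {w : E} (hw : w ∈ Submodule.span ℝ (F : Set E))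
    (u : E) (h : ∀ δ ∈ F, ⟪w, δ⟫_ℝ * ⟪u, δ⟫_ℝ ≤ ⟪w, δ⟫_ℝ ^ 2) : ⟪w, u⟫_ℝ ≤ ⟪w, w⟫_ℝ := by
  rw [inner_eq_sum_div_casimirCoeff hF0 hF hw u, inner_eq_sum_div_casimirCoeff hF0 hF hw w]
  refine Finset.sum_le_sum fun δ hδ => div_le_div_of_nonneg_right ?_
    (casimirCoeff_pos hδ (ne_of_mem_of_not_mem hδ hF0)).le
  rw [real_inner_comm u δ, real_inner_comm w δ, ← pow_two]
  exact h δ hδ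

end Frame

section Pairing

variable {E : Type} [NormedAddCommGroup E] [InnerProductSpace ℝ E]

lemma pairR_neg_left (x a : E) : pairR (-x) a = -pairR x a := by
  simp only [pairR, inner_neg_left]
  ring

lemma inner_eq_pairR_mul {a : E} (ha : a ≠ 0) (x : E) : ⟪x, a⟫_ℝ = pairR x a * ⟪a, a⟫_ℝ / 2 := by
  have : ⟪a, a⟫_ℝ ≠ 0 := inner_self_ne_zero.2 ha
  rw [pairR]
  field_simp

lemma pairR_lt_two_iff {a : E} (ha : a ≠ 0) (x : E) : pairR x a < 2 ↔ ⟪x, a⟫_ℝ < ⟪a, a⟫_ℝ := by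
  have : 0 < ⟪a, a⟫_ℝ := real_inner_self_pos.2 ha
  rw [inner_eq_pairR_mul ha]
  constructor <;> intro h <;> nlinarith

lemma inner_mul_inner_le_sq {b u δ : E} (hδ : δ ≠ 0)
    (hb : pairR b δ = -1 ∨ pairR b δ = 0 ∨ pairR b δ = 1)
    (hu : -1 ≤ pairR u δ ∧ pairR u δ ≤ 1) : ⟪b, δ⟫_ℝ * ⟪u, δ⟫_ℝ ≤ ⟪b, δ⟫_ℝ ^ 2 := by
  have : 0 < ⟪δ, δ⟫_ℝ := real_inner_self_pos.2 hδ
  rw [inner_eq_pairR_mul hδ b, inner_eq_pairR_mul hδ u]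
  obtain ⟨hu₁, hu₂⟩ := hu
  rcases hb with h | h | h <;> rw [h] <;> nlinarith

lemma inner_starProjection_self_lt (K : Submodule ℝ E) [K.HasOrthogonalProjection] {b : E}
    (hb : b ∉ K) : ⟪K.starProjection b, K.starProjection b⟫_ℝ < ⟪b, b⟫_ℝ := by
  have hlt : ‖K.starProjection b‖ < ‖b‖ :=
    (K.norm_starProjection_apply_le b).lt_of_ne fun h => hb ((K.mem_iff_norm_starProjection b).2 h)
  rw [real_inner_self_eq_norm_sq, real_inner_self_eq_norm_sq]
  exact pow_lt_pow_left₀ hlt (norm_nonneg _) two_ne_zero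

end Pairing

namespace RootSystemCtx

variable {ι E : Type} [Fintype ι] [DecidableEq ι] [NormedAddCommGroup E] [InnerProductSpace ℝ E]
  (S : RootSystemCtx ι E) {J : Finset ι}

lemma simple_mem_RootsJ {j : ι} (hj : j ∈ J) : S.simple j ∈ S.RootsJ J :=
  ⟨S.simple_mem j, Submodule.subset_span ⟨j, hj, rfl⟩⟩

lemma reflFun_mem_RootsJ {a b : E} (ha : a ∈ S.RootsJ J) (hb : b ∈ S.RootsJ J) :
    reflFun b a ∈ S.RootsJ J :=
  ⟨S.refl_stable a ha.1 b hb.1, Submodule.sub_mem _ ha.2 (Submodule.smul_mem _ _ hb.2)⟩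

lemma pairR_mem_of_notMem_span (hSL : S.SimplyLaced) {b δ : E} (hb : b ∈ S.Roots)
    (hbJ : b ∉ Submodule.span ℝ (S.simple '' ↑J)) (hδ : δ ∈ S.RootsJ J) :
    pairR b δ = -1 ∨ pairR b δ = 0 ∨ pairR b δ = 1 :=
  hSL b hb δ hδ.1 (fun h => hbJ (h ▸ hδ.2))
    (fun h => hbJ (neg_neg b ▸ Submodule.neg_mem _ (h ▸ hδ.2)))

theorem pairR_lt_two (hSL : S.SimplyLaced) {u : E} (huJ : u ∈ Submodule.span ℝ (S.simple '' ↑J))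
    (hu : ∀ a ∈ S.RootsJ J, -1 ≤ pairR u a ∧ pairR u a ≤ 1) {b : E} (hb : b ∈ S.Roots) :
    pairR u b < 2 := by
  set K := Submodule.span ℝ (S.simple '' ↑J)
  by_cases hbK : b ∈ K
  · exact (hu b ⟨hb, hbK⟩).2.trans_lt one_lt_two
  have : FiniteDimensional ℝ E := Module.Finite.of_basis S.simpleBasis
  have hfin : (S.RootsJ J).Finite := S.finite.subset fun _ h => h.1
  have hF0 : 0 ∉ hfin.toFinset := fun h => S.ne_zero 0 (hfin.mem_toFinset.1 h).1 rfl
  have hF : ∀ γ ∈ hfin.toFinset, ∀ δ ∈ hfin.toFinset, reflFun γ δ ∈ hfin.toFinset := by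
    simp only [Set.Finite.mem_toFinset]
    exact fun γ hγ δ hδ => S.reflFun_mem_RootsJ hδ hγ
  have hKF : K ≤ Submodule.span ℝ (hfin.toFinset : Set E) := by
    refine Submodule.span_mono ?_
    rintro _ ⟨j, hj, rfl⟩
    simpa using S.simple_mem_RootsJ hj
  set w := K.starProjection b
  have hproj : ∀ z ∈ K, ⟪w, z⟫_ℝ = ⟪b, z⟫_ℝ := fun z hz => by
    rw [K.inner_starProjection_left_eq_right, K.starProjection_eq_self_iff.2 hz]
  have hwu : ⟪w, u⟫_ℝ ≤ ⟪w, w⟫_ℝ := by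
    refine inner_le_inner_self_of_forall_mul_le_sq hF0 hF (hKF (K.starProjection_apply_mem b)) u
      fun δ hδ => ?_
    rw [Set.Finite.mem_toFinset] at hδ
    rw [hproj δ hδ.2]
    exact inner_mul_inner_le_sq (S.ne_zero δ hδ.1) (S.pairR_mem_of_notMem_span hSL hb hbK hδ)
      (hu δ hδ)
  rw [pairR_lt_two_iff (S.ne_zero b hb)]
  calc ⟪u, b⟫_ℝ = ⟪w, u⟫_ℝ := by rw [real_inner_comm, hproj u huJ]
    _ ≤ ⟪w, w⟫_ℝ := hwu
    _ < ⟪b, b⟫_ℝ := inner_starProjection_self_lt K hbK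

end RootSystemCtx

theorem pairing_lt_two_of_J_bounded_general
    {ι E : Type} [Fintype ι] [DecidableEq ι]
    [NormedAddCommGroup E] [InnerProductSpace ℝ E]
    (S : RootSystemCtx ι E) (hSL : S.SimplyLaced)
    (J : Finset ι)
    (u : E) (huJ : u ∈ Submodule.span ℝ (S.simple '' ↑J))
    (hu : ∀ a ∈ S.RootsJ J, -1 ≤ pairR u a ∧ pairR u a ≤ 1) :
    ∀ b ∈ S.Roots, -2 < pairR u b ∧ pairR u b < 2 := by
  intro b hb
  have hneg : ∀ a ∈ S.RootsJ J, -1 ≤ pairR (-u) a ∧ pairR (-u) a ≤ 1 := fun a ha => by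
    rw [pairR_neg_left]
    constructor <;> linarith [hu a ha]
  have hlower := S.pairR_lt_two hSL (Submodule.neg_mem _ huJ) hneg hb
  rw [pairR_neg_left] at hlower
  exact ⟨by linarith, S.pairR_lt_two hSL huJ hu hb⟩

/-- (simply-laced case) Let `u ∈ Q(R_J) ⊗ ℝ` be such that
`⟨u, α∨⟩ ∈ [-1, 1]` for all `α ∈ R_J`. Then `⟨u, β∨⟩ ∈ (-2, 2)` for all
`β ∈ R`. -/
theorem pairing_lt_two_of_J_bounded
    {ι E : Type} [Fintype ι] [DecidableEq ι]
    [NormedAddCommGroup E] [InnerProductSpace ℝ E]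
    (S : RootSystemCtx ι E) (hSL : S.SimplyLaced)
    (J : Finset ι) (hJne : J.Nonempty) (hJprop : J ≠ Finset.univ)
    (u : E) (huJ : u ∈ Submodule.span ℝ (S.simple '' ↑J))
    (hu : ∀ a ∈ S.RootsJ J, -1 ≤ pairR u a ∧ pairR u a ≤ 1) :
    ∀ b ∈ S.Roots, -2 < pairR u b ∧ pairR u b < 2 :=
  pairing_lt_two_of_J_bounded_general S hSL J u huJ hu
end
end

section
/- Let β ∈ R⁺∖R_J satisfy ⟨α_j, β∨⟩ ≤ 0 for all j ∈ J. Then every connected component of J contains at most one index j with ⟨α_j, β∨⟩ < 0, and for any such j one has ⟨α_j, β∨⟩ = −1. -/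
/-!
Common setup: an abstract reduced irreducible crystallographic root system `R`
inside a real inner product space `E`, with simple roots `α i` (`i : ι`) forming
a basis of `E`, Weyl group generated by the reflections in the roots
(equivalently, by the simple reflections), coroot pairing
`⟨x, a∨⟩ = 2 (x, a) / (a, a)`, weight lattice `P(R)`, root lattices `Q(R)`,
`Q(R_J)`, etc.
-/

open scoped BigOperators

noncomputable section

/-!
Suppose `j₁ ≠ j₂` are joined by a path `j₁ = i₀, …, iₘ = j₂` of distinct vertices in `J` and
`⟨α_{j₁}, β∨⟩, ⟨α_{j₂}, β∨⟩ < 0`. Simply-lacedness forces `β` and all `α_{iᵣ}` to have the same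
length, with `2 (β, α_{j₁}) = 2 (β, α_{j₂}) = 2 (α_{iᵣ}, α_{iᵣ₊₁}) = -‖β‖²`, while all other pairs
among these vectors have nonpositive inner product. Hence `σ = ∑ᵣ α_{iᵣ}` satisfies
`‖σ‖² ≤ ‖β‖²` and `(β, σ) ≤ -‖β‖²`, so `‖β + σ‖² ≤ 0` and `β = -σ` lies in the span of `R_J`.
-/

open RealInnerProductSpace

theorem Finset.sum_le_add_of_nonpos {ι M : Type*} [AddCommMonoid M] [PartialOrder M]
    [IsOrderedAddMonoid M] {s : Finset ι} {f : ι → M} {a b : ι}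
    (ha : a ∈ s) (hb : b ∈ s) (hab : a ≠ b) (hf : ∀ i ∈ s, f i ≤ 0) :
    ∑ i ∈ s, f i ≤ f a + f b := by
  classical
  have hsub : {a, b} ⊆ s := Finset.insert_subset ha (Finset.singleton_subset_iff.mpr hb)
  rw [← Finset.sum_pair hab, ← Finset.sum_sdiff hsub]
  exact add_le_of_nonpos_left (Finset.sum_nonpos fun i hi => hf i (Finset.mem_sdiff.mp hi).1)

section InnerProductSpace

variable {E : Type*} [NormedAddCommGroup E] [InnerProductSpace ℝ E]

theorem inner_list_sum_nonpos {x : E} {l : List E} (h : ∀ y ∈ l, ⟪x, y⟫ ≤ 0) :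
    ⟪x, l.sum⟫ ≤ 0 := by
  induction l with
  | nil => simp
  | cons y l ih =>
    rw [List.sum_cons, inner_add_right]
    exact add_nonpos (h y List.mem_cons_self) (ih fun z hz => h z (List.mem_cons_of_mem y hz))

theorem norm_sq_sum_cons_le_of_isChain {a : E} {l : List E}
    (hobtuse : (a :: l).Pairwise fun x y => ⟪x, y⟫ ≤ 0)
    (hchain : (a :: l).IsChain fun x y => ‖x‖ = ‖y‖ ∧ 2 * ⟪x, y⟫ = -‖x‖ ^ 2) :
    ‖(a :: l).sum‖ ^ 2 ≤ ‖a‖ ^ 2 := by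
  induction l generalizing a with
  | nil => simp
  | cons b l ih =>
    obtain ⟨⟨hab, habinner⟩, hchain⟩ := List.isChain_cons_cons.mp hchain
    obtain ⟨hafar, hobtuse⟩ := List.pairwise_cons.mp hobtuse
    have hrest : ⟪a, l.sum⟫ ≤ 0 :=
      inner_list_sum_nonpos fun y hy => hafar y (List.mem_cons_of_mem b hy)
    have ih := ih hobtuse hchain
    rw [List.sum_cons, norm_add_sq_real, List.sum_cons, inner_add_right]
    rw [List.sum_cons, ← hab] at ih
    linarith

end InnerProductSpace

section Pairing

variable {E : Type} [NormedAddCommGroup E] [InnerProductSpace ℝ E]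

theorem pairR_neg_iff {a b : E} (hb : b ≠ 0) : pairR a b < 0 ↔ ⟪a, b⟫ < 0 := by
  rw [pairR, div_lt_iff₀ (real_inner_self_pos.mpr hb), zero_mul]
  constructor <;> intro h <;> linarith

theorem pairR_nonpos_iff {a b : E} (hb : b ≠ 0) : pairR a b ≤ 0 ↔ ⟪a, b⟫ ≤ 0 := by
  rw [pairR, div_le_iff₀ (real_inner_self_pos.mpr hb), zero_mul]
  constructor <;> intro h <;> linarith

theorem pairR_eq_neg_one_iff {a b : E} (hb : b ≠ 0) :
    pairR a b = -1 ↔ 2 * ⟪a, b⟫ = -‖b‖ ^ 2 := by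
  rw [pairR, div_eq_iff (real_inner_self_pos.mpr hb).ne', real_inner_self_eq_norm_sq, neg_one_mul]

end Pairing

theorem Relation.ReflTransGen.exists_nodup_isChain {α : Type*} [DecidableEq α]
    {r : α → α → Prop} (hr : ∀ x y, r x y → r y x) {a b : α} (h : Relation.ReflTransGen r a b) :
    ∃ l : List α, (a :: l).Nodup ∧ (a :: l).IsChain r ∧ b ∈ a :: l := by
  have hadj : Relation.ReflTransGen (SimpleGraph.fromRel r).Adj a b := by
    induction h with
    | refl => exact .refl
    | @tail c d _ hcd ih =>
      by_cases hcd' : c = d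
      · exact hcd' ▸ ih
      · exact ih.tail ((SimpleGraph.fromRel_adj r c d).mpr ⟨hcd', .inl hcd⟩)
  obtain ⟨w⟩ := (SimpleGraph.reachable_iff_reflTransGen a b).mpr hadj
  let p := w.toPath
  refine ⟨p.1.support.tail, ?_, ?_, ?_⟩ <;> rw [p.1.cons_tail_support]
  · exact p.2.support_nodup
  · refine p.1.isChain_adj_support.imp fun x y hxy => ?_
    obtain ⟨-, hxy | hyx⟩ := (SimpleGraph.fromRel_adj r x y).mp hxy
    exacts [hxy, hr y x hyx]
  · exact p.1.end_mem_support

namespace RootSystemCtx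

variable {ι E : Type} [Fintype ι] [DecidableEq ι]
  [NormedAddCommGroup E] [InnerProductSpace ℝ E] (S : RootSystemCtx ι E)

theorem coweightPair_simple (i j : ι) :
    S.coweightPair (S.simple i) j = if i = j then 1 else 0 := by
  rw [coweightPair, ← Module.Basis.mk_apply S.indep S.span_top.ge i]
  exact Module.Basis.repr_self_apply _ i j

theorem coweightPair_neg (x : E) (i : ι) : S.coweightPair (-x) i = -S.coweightPair x i := by
  simp [coweightPair]

theorem coweightPair_sub (x y : E) (i : ι) :
    S.coweightPair (x - y) i = S.coweightPair x i - S.coweightPair y i := by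
  simp [coweightPair]

theorem coweightPair_nonneg_or_nonpos {a : E} (ha : a ∈ S.Roots) :
    (∀ i, 0 ≤ S.coweightPair a i) ∨ ∀ i, S.coweightPair a i ≤ 0 := by
  have hcoord (c : ι → ℝ) (i : ι) : S.coweightPair (∑ k, c k • S.simple k) i = c i := by
    simp_rw [coweightPair, ← Module.Basis.mk_apply S.indep S.span_top.ge]
    exact congrFun (S.simpleBasis.repr_sum_self c) i
  rcases S.pos_neg a ha with ⟨c, rfl⟩ | ⟨c, rfl⟩
  · left; intro i; rw [hcoord (fun k => (c k : ℝ))]; positivity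
  · right; intro i; rw [coweightPair_neg, hcoord (fun k => (c k : ℝ))]; simp

theorem simple_ne_neg_simple (i j : ι) : S.simple i ≠ -S.simple j := by
  intro h
  have := congrArg (S.coweightPair · i) h
  simp only [coweightPair_neg, coweightPair_simple] at this
  split_ifs at this <;> norm_num at this

theorem simple_sub_simple_notMem_roots {i j : ι} (hij : i ≠ j) :
    S.simple i - S.simple j ∉ S.Roots := by
  intro h
  have hi := S.coweightPair_sub (S.simple i) (S.simple j) i
  have hj := S.coweightPair_sub (S.simple i) (S.simple j) j
  simp only [coweightPair_simple, if_pos, if_neg hij, if_neg hij.symm] at hi hj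
  rcases S.coweightPair_nonneg_or_nonpos h with h | h
  · linarith [h j]
  · linarith [h i]

variable {S}

theorem SimplyLaced.pairR_eq_neg_one (hSL : S.SimplyLaced) {a b : E} (ha : a ∈ S.Roots)
    (hb : b ∈ S.Roots) (hba : b ≠ a) (hba' : b ≠ -a) (h : pairR a b < 0) : pairR a b = -1 := by
  rcases hSL a ha b hb hba hba' with h' | h' | h' <;> [exact h'; linarith; linarith]

theorem SimplyLaced.norm_eq_and_two_inner_eq (hSL : S.SimplyLaced) {a b : E}
    (ha : a ∈ S.Roots) (hb : b ∈ S.Roots) (hba : b ≠ a) (hba' : b ≠ -a) (h : ⟪a, b⟫ < 0) :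
    ‖a‖ = ‖b‖ ∧ 2 * ⟪a, b⟫ = -‖a‖ ^ 2 := by
  have ha0 := S.ne_zero a ha
  have hb0 := S.ne_zero b hb
  have hab' : a ≠ -b := fun h => hba' (by rw [h, neg_neg])
  have hab_inner := (pairR_eq_neg_one_iff hb0).mp
    (hSL.pairR_eq_neg_one ha hb hba hba' ((pairR_neg_iff hb0).mpr h))
  have hba_inner := (pairR_eq_neg_one_iff ha0).mp
    (hSL.pairR_eq_neg_one hb ha hba.symm hab' ((pairR_neg_iff ha0).mpr (by rwa [real_inner_comm])))
  rw [real_inner_comm] at hba_inner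
  exact ⟨(sq_eq_sq₀ (norm_nonneg a) (norm_nonneg b)).mp (by linarith), hba_inner⟩

theorem SimplyLaced.inner_simple_nonpos (hSL : S.SimplyLaced) {i j : ι} (hij : i ≠ j) :
    ⟪S.simple i, S.simple j⟫ ≤ 0 := by
  rw [← pairR_nonpos_iff (S.ne_zero _ (S.simple_mem j))]
  have hji : S.simple j ≠ S.simple i := fun h => hij (S.indep.injective h).symm
  rcases hSL _ (S.simple_mem i) _ (S.simple_mem j) hji (S.simple_ne_neg_simple j i) with h | h | h
  · linarith
  · linarith
  · have hrefl := S.refl_stable _ (S.simple_mem i) _ (S.simple_mem j)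
    rw [reflFun, h, one_smul] at hrefl
    exact absurd hrefl (S.simple_sub_simple_notMem_roots hij)

theorem SimplyLaced.norm_eq_and_two_inner_simple_eq (hSL : S.SimplyLaced) {i j : ι} (hij : i ≠ j)
    (h : ⟪S.simple i, S.simple j⟫ ≠ 0) :
    ‖S.simple i‖ = ‖S.simple j‖ ∧ 2 * ⟪S.simple i, S.simple j⟫ = -‖S.simple i‖ ^ 2 :=
  hSL.norm_eq_and_two_inner_eq (S.simple_mem i) (S.simple_mem j)
    (fun h => hij (S.indep.injective h).symm) (S.simple_ne_neg_simple j i)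
    (lt_of_le_of_ne (hSL.inner_simple_nonpos hij) h)

theorem SimplyLaced.norm_sq_sum_simple_le (hSL : S.SimplyLaced) {j : ι} {l : List ι}
    (hl : (j :: l).Nodup)
    (hchain : (j :: l).IsChain fun i i' => i ≠ i' ∧ ⟪S.simple i, S.simple i'⟫ ≠ 0) :
    ‖∑ i ∈ (j :: l).toFinset, S.simple i‖ ^ 2 ≤ ‖S.simple j‖ ^ 2 := by
  rw [List.sum_toFinset _ hl]
  have hobtuse : ((j :: l).map S.simple).Pairwise fun x y => ⟪x, y⟫ ≤ 0 :=
    List.pairwise_map.mpr (hl.imp fun hij => hSL.inner_simple_nonpos hij)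
  exact norm_sq_sum_cons_le_of_isChain hobtuse (List.isChain_map_of_isChain _
    (fun i i' h => hSL.norm_eq_and_two_inner_simple_eq h.1 h.2) hchain)

theorem SimplyLaced.norm_eq_and_two_inner_eq_of_notMem_span (hSL : S.SimplyLaced) {J : Finset ι}
    {β : E} (hβ : β ∈ S.Roots) (hβJ : β ∉ Submodule.span ℝ (S.simple '' ↑J)) {j : ι}
    (hj : j ∈ J) (h : pairR (S.simple j) β < 0) :
    ‖β‖ = ‖S.simple j‖ ∧ 2 * ⟪β, S.simple j⟫ = -‖β‖ ^ 2 := by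
  have hjJ : S.simple j ∈ Submodule.span ℝ (S.simple '' ↑J) := Submodule.subset_span ⟨j, hj, rfl⟩
  refine hSL.norm_eq_and_two_inner_eq hβ (S.simple_mem j) (fun h => hβJ (h ▸ hjJ))
    (fun h => hβJ ?_) ?_
  · rw [← neg_neg β, ← h]; exact Submodule.neg_mem _ hjJ
  · rwa [real_inner_comm, ← pairR_neg_iff (S.ne_zero β hβ)]

end RootSystemCtx

theorem component_at_most_one_negative_general
    {ι E : Type} [Fintype ι] [DecidableEq ι]
    [NormedAddCommGroup E] [InnerProductSpace ℝ E]
    (S : RootSystemCtx ι E) (hSL : S.SimplyLaced)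
    (J : Finset ι)
    (β : E) (hβpos : S.IsPositiveRoot β) (hβJ : β ∉ S.RootsJ J)
    (hneg : ∀ j ∈ J, pairR (S.simple j) β ≤ 0) :
    (∀ j₁ ∈ J, ∀ j₂ ∈ J,
        pairR (S.simple j₁) β < 0 → pairR (S.simple j₂) β < 0 →
        Relation.ReflTransGen
          (fun i i' : ι => i ∈ J ∧ i' ∈ J ∧ i ≠ i' ∧
            (inner ℝ (S.simple i) (S.simple i') : ℝ) ≠ 0) j₁ j₂ →
        j₁ = j₂) ∧
      ∀ j ∈ J, pairR (S.simple j) β < 0 → pairR (S.simple j) β = -1 := by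
  have hβ0 := S.ne_zero β hβpos.1
  set V := Submodule.span ℝ (S.simple '' ↑J)
  have hβV : β ∉ V := fun h => hβJ ⟨hβpos.1, h⟩
  have hend (j) (hj : j ∈ J) (h : pairR (S.simple j) β < 0) :=
    hSL.norm_eq_and_two_inner_eq_of_notMem_span hβpos.1 hβV hj h
  refine ⟨fun j₁ hj₁ j₂ hj₂ h₁ h₂ hpath => ?_, fun j hj h =>
    (pairR_eq_neg_one_iff hβ0).mpr (by rw [real_inner_comm]; exact (hend j hj h).2)⟩
  by_contra hj₁₂
  obtain ⟨l, hnodup, hchain, hj₂l⟩ := hpath.exists_nodup_isChain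
    fun i i' ⟨hi, hi', hii', h⟩ => ⟨hi', hi, hii'.symm, by rwa [real_inner_comm]⟩
  have hJ : ∀ i ∈ (j₁ :: l).toFinset, i ∈ J := fun i hi =>
    List.IsChain.induction (· ∈ J) _ hchain (fun _ _ h _ => h.2.1) (fun _ => hj₁) i
      (List.mem_toFinset.mp hi)
  set σ := ∑ i ∈ (j₁ :: l).toFinset, S.simple i
  have hσ : ‖σ‖ ^ 2 ≤ ‖β‖ ^ 2 := (hend j₁ hj₁ h₁).1 ▸
    hSL.norm_sq_sum_simple_le hnodup (hchain.imp fun _ _ h => h.2.2)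
  have hβσ : ⟪β, σ⟫ ≤ -‖β‖ ^ 2 := by
    have := Finset.sum_le_add_of_nonpos (f := fun i => ⟪β, S.simple i⟫)
      (List.mem_toFinset.mpr List.mem_cons_self) (List.mem_toFinset.mpr hj₂l) hj₁₂
      fun i hi => by rw [real_inner_comm, ← pairR_nonpos_iff hβ0]; exact hneg i (hJ i hi)
    rw [inner_sum]
    linarith [(hend j₁ hj₁ h₁).2, (hend j₂ hj₂ h₂).2]
  have hβσ0 : ‖β + σ‖ ^ 2 ≤ 0 := by linarith [norm_add_sq_real β σ]
  rw [sq_nonpos_iff, norm_eq_zero, ← eq_neg_iff_add_eq_zero] at hβσ0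
  exact hβV (hβσ0 ▸ V.neg_mem (V.sum_mem fun i hi => Submodule.subset_span ⟨i, hJ i hi, rfl⟩))

/-- (simply-laced case) Let `β ∈ R⁺ \ R_J` satisfy
`⟨α_j, β∨⟩ ≤ 0` for all `j ∈ J`. Then every connected component of `J` (for the
Dynkin-diagram adjacency, i.e. the relation of non-orthogonality of distinct
simple roots, restricted to `J`) contains at most one index `j` with
`⟨α_j, β∨⟩ < 0`, and for any such `j` one has `⟨α_j, β∨⟩ = -1`. -/
theorem component_at_most_one_negative
    {ι E : Type} [Fintype ι] [DecidableEq ι]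
    [NormedAddCommGroup E] [InnerProductSpace ℝ E]
    (S : RootSystemCtx ι E) (hSL : S.SimplyLaced)
    (J : Finset ι) (hJne : J.Nonempty) (hJprop : J ≠ Finset.univ)
    (β : E) (hβpos : S.IsPositiveRoot β) (hβJ : β ∉ S.RootsJ J)
    (hneg : ∀ j ∈ J, pairR (S.simple j) β ≤ 0) :
    (∀ j₁ ∈ J, ∀ j₂ ∈ J,
        pairR (S.simple j₁) β < 0 → pairR (S.simple j₂) β < 0 →
        Relation.ReflTransGen
          (fun i i' : ι => i ∈ J ∧ i' ∈ J ∧ i ≠ i' ∧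
            (inner ℝ (S.simple i) (S.simple i') : ℝ) ≠ 0) j₁ j₂ →
        j₁ = j₂) ∧
      ∀ j ∈ J, pairR (S.simple j) β < 0 → pairR (S.simple j) β = -1 :=
  component_at_most_one_negative_general S hSL J β hβpos hβJ hneg
end
end
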